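/- arXiv:1609.01807 — 2 statements merged into one kernel-verified Lean document; each statement's English description precedes it below -/
import Mathlib

section
/- Let Z be a nonnegative (or integrable) random variable and N an independent auxiliary index with pmf (p_n). Suppose for each n, Z_loc(n) is an unbiased estimator of q_n − q_{n-1} where q_n → L and ∑_n |q_n − q_{n-1}| < ∞. Then the estimator Z = Z_loc(N)/p_N satisfies E[Z] = L. -/
/-!
Pointwise, `Z_loc(N)/p_N = ∑ₙ 1{N = n} Z_loc(n)/pₙ`. By independence of `N` and `Z_loc(n)` the
`n`-th term has mean `pₙ E[Z_loc(n)]/pₙ = qₙ - qₙ₋₁` and absolute mean `E|Z_loc(n)|`, so the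
summability of `E|Z_loc(n)|` lets expectation and sum be exchanged, and the resulting series
telescopes to `lim qₙ = L`.
-/

open MeasureTheory ProbabilityTheory Filter

namespace ProbabilityTheory

variable {Ω β : Type*} [MeasurableSpace Ω] [MeasurableSpace β] {μ : Measure Ω}

theorem IndepFun.integral_indicator_preimage {N : Ω → β} {X : Ω → ℝ}
    (hNX : IndepFun N X μ) (hN : Measurable N) (hX : AEStronglyMeasurable X μ)
    {s : Set β} (hs : MeasurableSet s) :
    ∫ ω, (N ⁻¹' s).indicator X ω ∂μ = μ.real (N ⁻¹' s) * ∫ ω, X ω ∂μ := by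
  have hind : IndepFun (fun ω => s.indicator (1 : β → ℝ) (N ω)) X μ :=
    hNX.comp (measurable_one.indicator hs) measurable_id
  have hmeas : AEStronglyMeasurable (fun ω => s.indicator (1 : β → ℝ) (N ω)) μ :=
    ((measurable_one.indicator hs).comp hN).aestronglyMeasurable
  calc ∫ ω, (N ⁻¹' s).indicator X ω ∂μ = ∫ ω, s.indicator 1 (N ω) * X ω ∂μ := by
        congr 1 with ω
        by_cases hω : N ω ∈ s <;> simp [hω]
    _ = μ.real (N ⁻¹' s) * ∫ ω, X ω ∂μ := by
        rw [hind.integral_fun_mul_eq_mul_integral hmeas hX]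
        exact congrArg (· * _) (integral_indicator_one (hN hs))

theorem hasSum_integral_of_indepFun_index {N : Ω → ℕ} (hN : Measurable N)
    {Y : ℕ → Ω → ℝ} {p : ℕ → ℝ} (hY : ∀ n, Integrable (Y n) μ)
    (hNY : ∀ n, IndepFun N (Y n) μ) (hlaw : ∀ n, μ.real (N ⁻¹' {n}) = p n) (hp : ∀ n, p n ≠ 0)
    (hsum : Summable fun n => ∫ ω, |Y n ω| ∂μ) :
    HasSum (fun n => ∫ ω, Y n ω ∂μ) (∫ ω, Y (N ω) ω / p (N ω) ∂μ) := by
  set f : ℕ → Ω → ℝ := fun n => (N ⁻¹' {n}).indicator fun ω => Y n ω / p n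
  have hfiber_integral : ∀ n (g : ℝ → ℝ), Measurable g → Integrable (fun ω => g (Y n ω)) μ →
      ∫ ω, (N ⁻¹' {n}).indicator (fun ω => g (Y n ω)) ω ∂μ = p n * ∫ ω, g (Y n ω) ∂μ :=
    fun n g hg hgY => by
      rw [← hlaw]
      exact ((hNY n).comp measurable_id hg).integral_indicator_preimage hN hgY.1
        (measurableSet_singleton n)
  have hf_integral : ∀ n, ∫ ω, f n ω ∂μ = ∫ ω, Y n ω ∂μ := fun n => by
    simp only [f]
    rw [hfiber_integral n (· / p n) (measurable_id.div_const _) ((hY n).div_const _),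
      integral_div, mul_div_cancel₀ _ (hp n)]
  have hf_norm : ∀ n, ∫ ω, ‖f n ω‖ ∂μ = ∫ ω, |Y n ω| ∂μ := fun n => by
    have hpn : 0 < p n := (hlaw n ▸ measureReal_nonneg).lt_of_ne' (hp n)
    have hnorm_eq : ∀ ω, ‖f n ω‖ = (N ⁻¹' {n}).indicator (fun ω => |Y n ω| / p n) ω := fun ω => by
      simp only [f, norm_indicator_eq_indicator_norm, Real.norm_eq_abs, abs_div, abs_of_pos hpn]
    simp_rw [hnorm_eq]
    rw [hfiber_integral n (|·| / p n) (measurable_abs.div_const _) ((hY n).abs.div_const _),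
      integral_div, mul_div_cancel₀ _ (hp n)]
  have hf_tsum : ∀ ω, ∑' n, f n ω = Y (N ω) ω / p (N ω) := fun ω => by
    rw [tsum_eq_single (N ω) fun n hn => by simp [f, Ne.symm hn]]
    simp [f]
  have hf_int : ∀ n, Integrable (f n) μ := fun n =>
    ((hY n).div_const (p n)).indicator (hN (measurableSet_singleton n))
  simpa only [hf_integral, hf_tsum] using
    hasSum_integral_of_summable_integral_norm hf_int (by simpa only [hf_norm] using hsum)

end ProbabilityTheory

theorem unbiased_randomized_estimator_general
    {Ω : Type*} [MeasurableSpace Ω] (P : Measure Ω)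
    (Zloc : ℕ → Ω → ℝ)
    (N : Ω → ℕ) (hN : Measurable N) (hN1 : ∀ ω, 1 ≤ N ω)
    (hindep : ∀ n, IndepFun N (Zloc n) P)
    (p : ℕ → ℝ) (hp : ∀ n, 1 ≤ n → 0 < p n)
    (hlaw : ∀ n, 1 ≤ n → (P {ω | N ω = n}).toReal = p n)
    (q : ℕ → ℝ) (hq0 : q 0 = 0) (L : ℝ)
    (hlim : Tendsto q atTop (nhds L))
    (hmean : ∀ n, 1 ≤ n → ∫ ω, Zloc n ω ∂P = q n - q (n - 1))
    (hint : ∀ n, Integrable (Zloc n) P)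
    (habs : Summable (fun n : ℕ => ∫ ω, |Zloc n ω| ∂P)) :
    ∫ ω, Zloc (N ω) ω / p (N ω) ∂P = L := by
  set M : Ω → ℕ := fun ω => N ω - 1
  have hM : ∀ ω, M ω + 1 = N ω := fun ω => Nat.sub_add_cancel (hN1 ω)
  have hMlaw : ∀ n, P.real (M ⁻¹' {n}) = p (n + 1) := fun n => by
    have hfiber : M ⁻¹' {n} = {ω | N ω = n + 1} := by
      ext ω
      simp only [Set.mem_preimage, Set.mem_singleton_iff, Set.mem_ofPred_eq, ← hM]
      omega
    rw [hfiber, measureReal_def, hlaw _ (Nat.le_add_left 1 n)]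
  have hsum := hasSum_integral_of_indepFun_index (N := M) (Y := fun n => Zloc (n + 1))
    ((Measurable.of_discrete (f := (· - 1))).comp hN) (fun n => hint (n + 1))
    (fun n => (hindep (n + 1)).comp (φ := (· - 1)) (ψ := id) Measurable.of_discrete measurable_id)
    hMlaw (fun n => (hp _ (Nat.le_add_left 1 n)).ne') (habs.comp_injective (add_left_injective 1))
  simp only [hmean _ (Nat.le_add_left 1 _), Nat.add_sub_cancel, hM] at hsum
  have htelescope :
      Tendsto (fun n => q n - q 0) atTop (nhds (∫ ω, Zloc (N ω) ω / p (N ω) ∂P)) := by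
    simpa only [Finset.sum_range_sub] using hsum.tendsto_sum_nat
  exact tendsto_nhds_unique htelescope (by simpa only [hq0, sub_zero] using hlim)

/-- Unbiasedness of the randomized multilevel estimator: if `Z_loc n` has mean
`q_n − q_{n-1}` with `∑ E|Z_loc n| < ∞`, `q_n → L`, and `N` is an independent
index with `P(N = n) = p_n > 0`, then `E[Z_loc(N)/p_N] = L`. -/
theorem unbiased_randomized_estimator
    {Ω : Type*} [MeasurableSpace Ω] (P : Measure Ω) [IsProbabilityMeasure P]
    (Zloc : ℕ → Ω → ℝ) (hZmeas : ∀ n, Measurable (Zloc n))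
    (N : Ω → ℕ) (hN : Measurable N) (hN1 : ∀ ω, 1 ≤ N ω)
    (hindep : ∀ n, IndepFun N (Zloc n) P)
    (p : ℕ → ℝ) (hp : ∀ n, 1 ≤ n → 0 < p n)
    (hlaw : ∀ n, 1 ≤ n → (P {ω | N ω = n}).toReal = p n)
    (q : ℕ → ℝ) (hq0 : q 0 = 0) (L : ℝ)
    (hlim : Tendsto q atTop (nhds L))
    (hmean : ∀ n, 1 ≤ n → ∫ ω, Zloc n ω ∂P = q n - q (n - 1))
    (hint : ∀ n, Integrable (Zloc n) P)
    (habs : Summable (fun n : ℕ => ∫ ω, |Zloc n ω| ∂P)) :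
    ∫ ω, Zloc (N ω) ω / p (N ω) ∂P = L :=
  unbiased_randomized_estimator_general P Zloc N hN hN1 hindep p hp hlaw q hq0 L hlim hmean hint
    habs
end

section
/- Let X be a real random variable with E[X] = 0 and E[|X|^κ] < ∞ for some κ ∈ (1,2]. Then for any θ > 0, γ > 0, E[e^{θX} · 1{X ≤ γ/θ}] ≤ 1 + c·θ^κ where c = e^γ E[|X|^κ]. -/
/-!
Pointwise, `e^x ≤ 1 + x + |x|^κ e^y` whenever `x ≤ y`, `0 ≤ y` and `1 ≤ κ ≤ 2`: for `|x| ≤ 1` this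
is the quadratic Taylor bound together with `x² ≤ |x|^κ`, for `x < -1` it is `e^x ≤ 1 = 1 + x + |x|`,
and for `x > 1` it is `e^x ≤ e^y`. Apply it to `x = θX`, `y = γ` on the event `{θX ≤ γ}`. The right
side is nonnegative everywhere, so its integral over the event is at most its expectation, in which
the linear term vanishes because `E[X] = 0`.
-/

open MeasureTheory

namespace Real

lemma one_add_add_abs_rpow_nonneg {κ : ℝ} (x : ℝ) (hκ : 1 ≤ κ) : 0 ≤ 1 + x + |x| ^ κ := by
  rcases le_or_gt (-1) x with hx | hx
  · linarith [rpow_nonneg (abs_nonneg x) κ]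
  · have h := self_le_rpow_of_one_le (x := |x|) (by rw [abs_of_neg (by linarith)]; linarith) hκ
    linarith [neg_le_abs x]

lemma exp_le_one_add_add_abs_rpow {κ x : ℝ} (hκ1 : 1 ≤ κ) (hκ2 : κ ≤ 2) (hx : x ≤ 1) :
    exp x ≤ 1 + x + |x| ^ κ := by
  rcases le_or_gt |x| 1 with hx1 | hx1
  · have hquad : exp x ≤ 1 + x + |x| ^ (2 : ℝ) := by
      rw [rpow_two, sq_abs]
      linarith [(abs_sub_le_iff.1 (abs_exp_sub_one_sub_id_le hx1)).1]
    have hpow : |x| ^ (2 : ℝ) ≤ |x| ^ κ :=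
      rpow_le_rpow_of_exponent_ge' (abs_nonneg x) hx1 (by linarith) hκ2
    linarith
  · have hneg : x < 0 := by
      by_contra! h
      rw [abs_of_nonneg h] at hx1
      linarith
    have hpow := self_le_rpow_of_one_le hx1.le hκ1
    have habs : |x| = -x := abs_of_neg hneg
    linarith [exp_le_one_iff.2 hneg.le]

lemma exp_le_one_add_add_abs_rpow_mul_exp {κ x y : ℝ} (hκ1 : 1 ≤ κ) (hκ2 : κ ≤ 2) (hxy : x ≤ y)
    (hy : 0 ≤ y) : exp x ≤ 1 + x + |x| ^ κ * exp y := by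
  have hey : 1 ≤ exp y := one_le_exp hy
  have hpow : 0 ≤ |x| ^ κ := rpow_nonneg (abs_nonneg x) κ
  rcases le_or_gt x 1 with hx | hx
  · calc exp x ≤ 1 + x + |x| ^ κ := exp_le_one_add_add_abs_rpow hκ1 hκ2 hx
      _ ≤ 1 + x + |x| ^ κ * exp y := by gcongr; exact le_mul_of_one_le_right hpow hey
  · have h1 : 1 ≤ |x| ^ κ := one_le_rpow (by rw [abs_of_pos (by linarith)]; linarith) (by linarith)
    calc exp x ≤ exp y := exp_le_exp.2 hxy
      _ ≤ |x| ^ κ * exp y := le_mul_of_one_le_left (exp_pos y).le h1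
      _ ≤ 1 + x + |x| ^ κ * exp y := by linarith

end Real

open Real in
lemma setIntegral_exp_le_one_add_exp_mul_integral_abs_rpow {Ω : Type*} [MeasurableSpace Ω]
    {P : Measure Ω} [IsProbabilityMeasure P] {Y : Ω → ℝ} (hY : Integrable Y P)
    (hmean : ∫ ω, Y ω ∂P = 0) {κ : ℝ} (hκ1 : 1 ≤ κ) (hκ2 : κ ≤ 2)
    (hmom : Integrable (fun ω => |Y ω| ^ κ) P) {y : ℝ} (hy : 0 ≤ y) :
    ∫ ω in {ω | Y ω ≤ y}, exp (Y ω) ∂P ≤ 1 + exp y * ∫ ω, |Y ω| ^ κ ∂P := by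
  set f : Ω → ℝ := fun ω => 1 + Y ω + |Y ω| ^ κ * exp y
  have h1Y : Integrable (fun ω => 1 + Y ω) P := (integrable_const 1).add hY
  have hf_int : Integrable f P := h1Y.add (hmom.mul_const _)
  have hf_nonneg (ω : Ω) : 0 ≤ f ω := by
    have hnonneg := one_add_add_abs_rpow_nonneg (Y ω) hκ1
    have hscale := le_mul_of_one_le_right (rpow_nonneg (abs_nonneg (Y ω)) κ) (one_le_exp hy)
    simp only [f]
    linarith
  have hf_integral : ∫ ω, f ω ∂P = 1 + exp y * ∫ ω, |Y ω| ^ κ ∂P := by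
    simp only [f]
    rw [integral_add h1Y (hmom.mul_const _),
      integral_add (integrable_const 1) hY, integral_mul_const, hmean]
    simp only [integral_const, probReal_univ, smul_eq_mul, mul_one]
    ring
  have hA : NullMeasurableSet {ω | Y ω ≤ y} P :=
    nullMeasurableSet_le hY.aemeasurable aemeasurable_const
  calc ∫ ω in {ω | Y ω ≤ y}, exp (Y ω) ∂P ≤ ∫ ω in {ω | Y ω ≤ y}, f ω ∂P :=
        integral_mono_of_nonneg (ae_of_all _ fun ω => (exp_pos _).le) hf_int.integrableOn <| by
          filter_upwards [ae_restrict_mem₀ hA] with ω hω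
          exact exp_le_one_add_add_abs_rpow_mul_exp hκ1 hκ2 hω hy
    _ ≤ ∫ ω, f ω ∂P := setIntegral_le_integral hf_int (ae_of_all _ hf_nonneg)
    _ = 1 + exp y * ∫ ω, |Y ω| ^ κ ∂P := hf_integral

theorem truncated_exp_moment_bound_general
    {Ω : Type*} [MeasurableSpace Ω] (P : Measure Ω) [IsProbabilityMeasure P]
    (X : Ω → ℝ) (hint : Integrable X P)
    (hmean : ∫ ω, X ω ∂P = 0)
    (κ : ℝ) (hκ1 : 1 < κ) (hκ2 : κ ≤ 2)
    (hκmom : Integrable (fun ω => |X ω| ^ κ) P)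
    (θ γ : ℝ) (hθ : 0 < θ) (hγ : 0 < γ) :
    ∫ ω in {ω | X ω ≤ γ / θ}, Real.exp (θ * X ω) ∂P ≤
      1 + (Real.exp γ * ∫ ω, |X ω| ^ κ ∂P) * θ ^ κ := by
  have habs_rpow (ω : Ω) : |θ * X ω| ^ κ = θ ^ κ * |X ω| ^ κ := by
    rw [abs_mul, abs_of_pos hθ, Real.mul_rpow hθ.le (abs_nonneg _)]
  have hset : {ω | X ω ≤ γ / θ} = {ω | θ * X ω ≤ γ} := by
    ext ω
    exact le_div_iff₀' hθ
  have hbound := setIntegral_exp_le_one_add_exp_mul_integral_abs_rpow (hint.const_mul θ)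
    (by rw [integral_const_mul, hmean, mul_zero]) hκ1.le hκ2
    (by simpa only [habs_rpow] using hκmom.const_mul (θ ^ κ)) hγ.le
  rw [hset]
  simpa only [habs_rpow, integral_const_mul, mul_comm, mul_left_comm] using hbound

/-- Truncated exponential moment bound: if `E[X] = 0` and `E[|X|^κ] < ∞` for
some `κ ∈ (1,2]`, then for any `θ > 0`, `γ > 0`,
`E[e^{θX} · 1{X ≤ γ/θ}] ≤ 1 + c θ^κ` with `c = e^γ E[|X|^κ]`. -/
theorem truncated_exp_moment_bound
    {Ω : Type*} [MeasurableSpace Ω] (P : Measure Ω) [IsProbabilityMeasure P]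
    (X : Ω → ℝ) (hX : Measurable X) (hint : Integrable X P)
    (hmean : ∫ ω, X ω ∂P = 0)
    (κ : ℝ) (hκ1 : 1 < κ) (hκ2 : κ ≤ 2)
    (hκmom : Integrable (fun ω => |X ω| ^ κ) P)
    (θ γ : ℝ) (hθ : 0 < θ) (hγ : 0 < γ) :
    ∫ ω in {ω | X ω ≤ γ / θ}, Real.exp (θ * X ω) ∂P ≤
      1 + (Real.exp γ * ∫ ω, |X ω| ^ κ ∂P) * θ ^ κ :=
  truncated_exp_moment_bound_general P X hint hmean κ hκ1 hκ2 hκmom θ γ hθ hγ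
end
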